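/- Let L₁, L₂: N₁ → T*∂M be two homogeneous-of-degree-1, invertible symplectomorphisms from a conic open set N₁ ⊆ T*∂M, inducing the same map on the spherical bundle (i.e., L₂(x,ξ) ∈ ℝ₊ · L₁(x,ξ) for all (x,ξ)). Write L₂(x,ξ) = (y, φ(x,ξ)η) when L₁(x,ξ) = (y, η) with φ: N₁ → ℝ₊ homogeneous of degree 0. Then the composition T = L₁^{-1} ∘ L₂ has the form T(x,ξ) = (x, φ(x,ξ)ξ), and T being a symplectomorphism together with homogeneity of degree 0 of φ forces φ ≡ 1, so L₁ = L₂. -/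

import Mathlib

/-!
Differentiating the homogeneity of `L` along the ray `t ↦ (x, tξ)` shows that `dL` maps the
radial vector `(0, ξ)` to the radial vector `(0, η)` at the image point, and pairing with a radial
vector under `symplForm` is the Liouville form `ξ · δx`. Since `L₂ = (y, φ η)` while `L₁ = (y, η)`,
the two differentials have the same base component, so comparing `dL₁` and `dL₂` on the pair
`(0, ξ)`, `(ξ, 0)` gives `φ |ξ|² = |ξ|²`; and `ξ ≠ 0` because `dL₁ (0, ξ) = (0, η) ≠ 0`.
-/

/-- The standard symplectic form `Σ dξ_j ∧ dx^j` on `T*ℝ^m ≅ ℝ^m × ℝ^m`,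
evaluated on tangent vectors `v = (δx, δξ)`, `w`. -/
def symplForm (m : ℕ) (v w : (Fin m → ℝ) × (Fin m → ℝ)) : ℝ :=
  (∑ i, v.2 i * w.1 i) - (∑ i, w.2 i * v.1 i)

open Filter Topology

section Homogeneous

variable {E F E' F' : Type*} [NormedAddCommGroup E] [NormedSpace ℝ E]
  [NormedAddCommGroup F] [NormedSpace ℝ F] [NormedAddCommGroup E'] [NormedSpace ℝ E']
  [NormedAddCommGroup F'] [NormedSpace ℝ F']

lemma hasDerivAt_prodMk_smul (x : E) (ξ : F) :
    HasDerivAt (fun t : ℝ => (x, t • ξ)) ((0 : E), ξ) 1 :=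
  (hasDerivAt_const 1 x).prodMk (by simpa using (hasDerivAt_id (1 : ℝ)).smul_const ξ)

lemma fderiv_apply_zero_snd_of_homogeneous {L : E × F → E' × F'} {z : E × F}
    (hd : DifferentiableAt ℝ L z)
    (hhom : ∀ t : ℝ, 0 < t → L (z.1, t • z.2) = ((L z).1, t • (L z).2)) :
    fderiv ℝ L z (0, z.2) = (0, (L z).2) := by
  have hL : HasFDerivAt L (fderiv ℝ L z) (z.1, (1 : ℝ) • z.2) := by
    simpa using hd.hasFDerivAt
  have hcomp := hL.comp_hasDerivAt 1 (hasDerivAt_prodMk_smul z.1 z.2)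
  have hray : (L ∘ fun t : ℝ => (z.1, t • z.2)) =ᶠ[𝓝 1]
      fun t : ℝ => ((L z).1, t • (L z).2) := by
    filter_upwards [Ioi_mem_nhds one_pos] with t ht
    exact hhom t ht
  exact hcomp.unique ((hasDerivAt_prodMk_smul _ _).congr_of_eventuallyEq hray)

lemma fderiv_apply_fst_eq_of_eventuallyEq_fst {L₁ L₂ : E → E' × F'} {z : E}
    (hd₁ : DifferentiableAt ℝ L₁ z) (hd₂ : DifferentiableAt ℝ L₂ z)
    (h : (fun w => (L₁ w).1) =ᶠ[𝓝 z] fun w => (L₂ w).1) (v : E) :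
    (fderiv ℝ L₁ z v).1 = (fderiv ℝ L₂ z v).1 := by
  have h₁ := hd₁.hasFDerivAt.fst.fderiv
  have h₂ := hd₂.hasFDerivAt.fst.fderiv
  have := congrArg (· v) (h.fderiv_eq (𝕜 := ℝ))
  simpa [h₁, h₂] using this

end Homogeneous

section Symplectic

variable {m : ℕ}

lemma symplForm_zero_fst (ξ : Fin m → ℝ) (w : (Fin m → ℝ) × (Fin m → ℝ)) :
    symplForm m (0, ξ) w = ξ ⬝ᵥ w.1 := by
  simp [symplForm, dotProduct]

lemma eq_one_of_symplForm_preserving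
    {A B : (Fin m → ℝ) × (Fin m → ℝ) → (Fin m → ℝ) × (Fin m → ℝ)}
    (hA : ∀ v w, symplForm m (A v) (A w) = symplForm m v w)
    (hB : ∀ v w, symplForm m (B v) (B w) = symplForm m v w)
    (hfst : ∀ v, (B v).1 = (A v).1) {ξ η : Fin m → ℝ} {t : ℝ} (hξ : ξ ≠ 0)
    (hAξ : A (0, ξ) = (0, η)) (hBξ : B (0, ξ) = (0, t • η)) : t = 1 := by
  set v : (Fin m → ℝ) × (Fin m → ℝ) := (ξ, 0)
  have key : t * (ξ ⬝ᵥ ξ) = ξ ⬝ᵥ ξ :=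
    calc t * (ξ ⬝ᵥ ξ) = t * symplForm m (A (0, ξ)) (A v) := by
          rw [hA, symplForm_zero_fst]
      _ = symplForm m (B (0, ξ)) (B v) := by
          rw [hAξ, hBξ, symplForm_zero_fst, symplForm_zero_fst, hfst, smul_dotProduct,
            smul_eq_mul]
      _ = ξ ⬝ᵥ ξ := by rw [hB, symplForm_zero_fst]
  exact (mul_eq_right₀ (dotProduct_self_eq_zero.not.mpr hξ)).mp key

end Symplectic

theorem stmt_19_general (m : ℕ) (N₁ : Set ((Fin m → ℝ) × (Fin m → ℝ)))
    (hopen : IsOpen N₁)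
    (L₁ L₂ : ((Fin m → ℝ) × (Fin m → ℝ)) → ((Fin m → ℝ) × (Fin m → ℝ)))
    (hd1 : ∀ z ∈ N₁, DifferentiableAt ℝ L₁ z)
    (hd2 : ∀ z ∈ N₁, DifferentiableAt ℝ L₂ z)
    (hhom1 : ∀ t : ℝ, 0 < t → ∀ z ∈ N₁,
      L₁ (z.1, t • z.2) = ((L₁ z).1, t • (L₁ z).2))
    (hhom2 : ∀ t : ℝ, 0 < t → ∀ z ∈ N₁,
      L₂ (z.1, t • z.2) = ((L₂ z).1, t • (L₂ z).2))
    (hsymp1 : ∀ z ∈ N₁, ∀ v w,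
      symplForm m (fderiv ℝ L₁ z v) (fderiv ℝ L₁ z w) = symplForm m v w)
    (hsymp2 : ∀ z ∈ N₁, ∀ v w,
      symplForm m (fderiv ℝ L₂ z v) (fderiv ℝ L₂ z w) = symplForm m v w)
    (hnz : ∀ z ∈ N₁, (L₁ z).2 ≠ 0)
    (hsph : ∀ z ∈ N₁, ∃ t : ℝ, 0 < t ∧ L₂ z = ((L₁ z).1, t • (L₁ z).2)) :
    ∀ z ∈ N₁, L₂ z = L₁ z := by
  intro z hz
  obtain ⟨t, -, hL⟩ := hsph z hz
  have he1 := fderiv_apply_zero_snd_of_homogeneous (hd1 z hz) (fun s hs => hhom1 s hs z hz)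
  have he2 := fderiv_apply_zero_snd_of_homogeneous (hd2 z hz) (fun s hs => hhom2 s hs z hz)
  rw [hL] at he2
  have hfst_eq : (fun w => (L₂ w).1) =ᶠ[𝓝 z] fun w => (L₁ w).1 := by
    filter_upwards [hopen.mem_nhds hz] with w hw
    obtain ⟨s, -, hs⟩ := hsph w hw
    rw [hs]
  have hξ : z.2 ≠ 0 := by
    intro h0
    rw [h0, Prod.mk_zero_zero, map_zero] at he1
    exact hnz z hz (congrArg Prod.snd he1).symm
  have ht : t = 1 := eq_one_of_symplForm_preserving (hsymp1 z hz) (hsymp2 z hz)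
    (fderiv_apply_fst_eq_of_eventuallyEq_fst (hd2 z hz) (hd1 z hz) hfst_eq) hξ he1 he2
  rw [hL, ht, one_smul]

/-- Lemma 5.2: two invertible, positively homogeneous of degree 1
symplectomorphisms `L₁, L₂` on a conic open set `N₁ ⊆ T*∂M` (with nonvanishing
fiber components) inducing the same map on the spherical bundle — i.e.
`L₂(x,ξ) = (y, φ(x,ξ) η)` whenever `L₁(x,ξ) = (y, η)`, with `φ > 0`
homogeneous of degree 0 — coincide: the rescaling `φ` is forced to be `≡ 1`,
so `L₁ = L₂` on `N₁`. -/
theorem stmt_19 (m : ℕ) (N₁ : Set ((Fin m → ℝ) × (Fin m → ℝ)))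
    (hopen : IsOpen N₁)
    (hcone : ∀ t : ℝ, 0 < t → ∀ z ∈ N₁, (z.1, t • z.2) ∈ N₁)
    (L₁ L₂ : ((Fin m → ℝ) × (Fin m → ℝ)) → ((Fin m → ℝ) × (Fin m → ℝ)))
    (hd1 : ∀ z ∈ N₁, DifferentiableAt ℝ L₁ z)
    (hd2 : ∀ z ∈ N₁, DifferentiableAt ℝ L₂ z)
    (hhom1 : ∀ t : ℝ, 0 < t → ∀ z ∈ N₁,
      L₁ (z.1, t • z.2) = ((L₁ z).1, t • (L₁ z).2))
    (hhom2 : ∀ t : ℝ, 0 < t → ∀ z ∈ N₁,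
      L₂ (z.1, t • z.2) = ((L₂ z).1, t • (L₂ z).2))
    (hsymp1 : ∀ z ∈ N₁, ∀ v w,
      symplForm m (fderiv ℝ L₁ z v) (fderiv ℝ L₁ z w) = symplForm m v w)
    (hsymp2 : ∀ z ∈ N₁, ∀ v w,
      symplForm m (fderiv ℝ L₂ z v) (fderiv ℝ L₂ z w) = symplForm m v w)
    (hinj1 : Set.InjOn L₁ N₁) (hinj2 : Set.InjOn L₂ N₁)
    (hnz : ∀ z ∈ N₁, (L₁ z).2 ≠ 0)
    (hsph : ∀ z ∈ N₁, ∃ t : ℝ, 0 < t ∧ L₂ z = ((L₁ z).1, t • (L₁ z).2)) :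
    ∀ z ∈ N₁, L₂ z = L₁ z :=
  stmt_19_general m N₁ hopen L₁ L₂ hd1 hd2 hhom1 hhom2 hsymp1 hsymp2 hnz hsph
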